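/- For each N ∈ ℕ, let L be an immigration-death process absorbing at 0, with immigration rate α(N) > 0 and death rate μ(N) > 0: its transition rates for x ≥ 1 are x → x+1 at rate α and x → x−1 at rate μx, and 0 is absorbing. Let L_0 = l(N) → ∞ as N → ∞. If lim_{N→∞} l(N)μ(N)/α(N) > e, then the probability that L ever reaches the level 2l(N) tends to 0 as N → ∞. -/

import Mathlib

open Filter Set

/-- A continuous-time Markov chain on a countable state space `S`
with jump-rate function `q` (`q x y` is the rate of jumps `x → y` for `x ≠ y`),
bundled together with its underlying probability space.
The law of the process is pinned down by right-continuity of the paths,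
the Markov property, time-homogeneity, and the infinitesimal jump rates. -/
structure CTMC {S : Type*} [MeasurableSpace S] (q : S → S → ℝ) where
  /-- the sample space -/
  Omega : Type
  [mOmega : MeasurableSpace Omega]
  /-- the underlying probability measure -/
  μ : MeasureTheory.Measure Omega
  [isProb : MeasureTheory.IsProbabilityMeasure μ]
  /-- the process: `X t ω` is the state at time `t` -/
  X : ℝ → Omega → S
  meas : ∀ t : ℝ, Measurable (X t)
  /-- paths are right-continuous (w.r.t. the discrete topology on `S`) -/
  rightCont : ∀ ω t, ∃ ε > 0, ∀ s, t ≤ s → s < t + ε → X s ω = X t ω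
  /-- the Markov property: conditionally on the present state, the future is
  independent of the past (stated multiplicatively to avoid conditioning on
  null events) -/
  markov : ∀ (n : ℕ) (ts : Fin n → ℝ) (xs : Fin n → S) (t s : ℝ) (x y : S),
    (∀ i, 0 ≤ ts i ∧ ts i ≤ t) → t ≤ s →
    μ ({ω | X s ω = y} ∩ {ω | X t ω = x} ∩ ⋂ i, {ω | X (ts i) ω = xs i})
      * μ {ω | X t ω = x}
    = μ ({ω | X s ω = y} ∩ {ω | X t ω = x})
      * μ ({ω | X t ω = x} ∩ ⋂ i, {ω | X (ts i) ω = xs i})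
  /-- time-homogeneity of the transition probabilities -/
  homog : ∀ (t u s : ℝ) (x y : S), 0 ≤ t → 0 ≤ u → 0 ≤ s →
    μ ({ω | X (t + s) ω = y} ∩ {ω | X t ω = x}) * μ {ω | X u ω = x}
    = μ ({ω | X (u + s) ω = y} ∩ {ω | X u ω = x}) * μ {ω | X t ω = x}
  /-- infinitesimal jump rates: for `x ≠ y`,
  `P(X_{t+h} = y, X_t = x) = q x y · h · P(X_t = x) + o(h)` -/
  rate : ∀ (t : ℝ) (x y : S), 0 ≤ t → x ≠ y →
    Tendsto
      (fun h : ℝ => (μ ({ω | X (t + h) ω = y} ∩ {ω | X t ω = x})).toReal / h)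
      (nhdsWithin 0 (Set.Ioi 0))
      (nhds (q x y * (μ {ω | X t ω = x}).toReal))
  /-- infinitesimal holding rate:
  `P(X_{t+h} = x, X_t = x) = (1 - (∑_y q x y) · h) · P(X_t = x) + o(h)` -/
  rate_stay : ∀ (t : ℝ) (x : S), 0 ≤ t →
    Tendsto
      (fun h : ℝ =>
        ((μ ({ω | X (t + h) ω = x} ∩ {ω | X t ω = x})).toReal
          - (μ {ω | X t ω = x}).toReal) / h)
      (nhdsWithin 0 (Set.Ioi 0))
      (nhds (-(∑' y, q x y) * (μ {ω | X t ω = x}).toReal))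

attribute [instance] CTMC.mOmega CTMC.isProb

open MeasureTheory

/-- Jump rates of an immigration-death process absorbing at `0`, with immigration
rate `alpha` and death rate `mu`: for `x ≥ 1`, `x → x+1` at rate `alpha` and
`x → x-1` at rate `mu * x`; the state `0` is absorbing. -/
noncomputable def idAbsRates (alpha mu : ℝ) : ℕ → ℕ → ℝ :=
  fun x y =>
    if x = 0 then 0
    else if y = x + 1 then alpha
    else if y + 1 = x then mu * x
    else 0


/-!
With `ρ = μ / α`, the scale function `φ x = ∑_{k<x} ρ^k k!` is harmonic for the generator away
from `0`, so `Φ = φ (min · 2l)` satisfies `P_h Φ ≤ Φ + o(h)` uniformly in the state: for the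
finitely many states below `2l` this follows from the jump rates, and above `2l` the function is
at its maximum. Chapman-Kolmogorov steps of length `h → 0` then make `Φ(X_t)` a supermartingale
along cylinder events, and optional stopping at finitely many times (then, by right-continuity,
at all rational times) gives `P(X hits 2l) ≤ φ l / φ (2l)`. When `l ρ ≥ c`, each of the `l`
terms of `φ l` is at most `(e/c)^l` times the last term of `φ (2l)`, by `n! ≥ (n/e)^n`; so the
hitting probability is at most `l (e/c)^l → 0` once `c > e`.
-/

open scoped Nat Topology NNRat ENNReal

theorem tsum_comm_of_nonneg {α β : Type*} {f : α → β → ℝ} (hf : ∀ a b, 0 ≤ f a b)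
    (hrow : ∀ a, Summable (f a)) (hsum : Summable fun a => ∑' b, f a b) :
    ∑' a, ∑' b, f a b = ∑' b, ∑' a, f a b :=
  (((summable_prod_of_nonneg fun p => hf p.1 p.2).2 ⟨hrow, hsum⟩ :
    Summable (Function.uncurry f))).tsum_comm.symm

theorem Summable.bounded_mul {ι : Type*} {Φ g : ι → ℝ} {C : ℝ} (hg : Summable g)
    (hg0 : 0 ≤ g) (hΦ0 : 0 ≤ Φ) (hΦC : ∀ i, Φ i ≤ C) : Summable fun i => Φ i * g i :=
  (hg.mul_left C).of_nonneg_of_le (fun i => mul_nonneg (hΦ0 i) (hg0 i))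
    fun i => mul_le_mul_of_nonneg_right (hΦC i) (hg0 i)

theorem tsum_mul_le_add_sum {ι : Type*} {Φ g : ι → ℝ} {C : ℝ} (hC : 0 ≤ C) (hΦ0 : 0 ≤ Φ)
    (hΦC : ∀ i, Φ i ≤ C) (hg : Summable g) (hg0 : 0 ≤ g) (hg1 : ∑' i, g i ≤ 1)
    (s : Finset ι) :
    ∑' i, Φ i * g i ≤ C + ∑ i ∈ s, (Φ i - C) * g i := by
  have hΦg := hg.bounded_mul hg0 hΦ0 hΦC
  have hs := ((hg.mul_left C).sub hΦg).sum_le_tsum s fun i _ =>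
    sub_nonneg.2 (mul_le_mul_of_nonneg_right (hΦC i) (hg0 i))
  rw [hg.mul_left C |>.tsum_sub hΦg, tsum_mul_left] at hs
  have hCg : C * ∑' i, g i ≤ C := mul_le_of_le_one_right hC hg1
  simp only [sub_mul, Finset.sum_sub_distrib, ← Finset.mul_sum] at hs ⊢
  linarith

theorem le_add_mul_sub_of_eventually_le {F : ℝ → ℝ} {c t s : ℝ} (hts : t ≤ s)
    (hstep : ∀ᶠ h in 𝓝[>] 0, ∀ v, t ≤ v → F (v + h) ≤ F v + c * h) :
    F s ≤ F t + c * (s - t) := by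
  obtain rfl | hlt := hts.eq_or_lt
  · simp
  obtain ⟨δ, hδ, hball⟩ := Metric.mem_nhdsWithin_iff.1 hstep
  obtain ⟨n, hn⟩ := exists_nat_gt ((s - t) / δ)
  have hn0 : (0 : ℝ) < n := lt_trans (by have := sub_pos.2 hlt; positivity) hn
  set h := (s - t) / n
  have hh : h ∈ Metric.ball 0 δ ∩ Ioi 0 := by
    refine ⟨?_, div_pos (sub_pos.2 hlt) hn0⟩
    rw [Metric.mem_ball, Real.dist_0_eq_abs, abs_of_pos (by positivity), div_lt_iff₀ hn0]
    rwa [div_lt_iff₀ hδ, mul_comm] at hn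
  have hiter : ∀ k : ℕ, F (t + k * h) ≤ F t + c * (k * h) := by
    intro k
    induction k with
    | zero => simp
    | succ k ih =>
      have := hball hh (t + k * h) (le_add_of_nonneg_right (by positivity))
      push_cast
      rw [add_one_mul, ← add_assoc]
      linarith
  simpa [h, mul_div_cancel₀ _ hn0.ne'] using hiter n

namespace CTMC

variable {S : Type*} [MeasurableSpace S] {q : S → S → ℝ} (M : CTMC q)

def Reachable (z : S) : Prop := ∃ v, 0 ≤ v ∧ M.μ (M.X v ⁻¹' {z}) ≠ 0

open scoped Classical in
/-- The transition probability `P(X_{v+h} = y | X_v = z)`, computed at some time `v ≥ 0` at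
which `z` is occupied with positive probability (by time-homogeneity the choice of `v` does not
matter). -/
noncomputable def transProb (h : ℝ) (z y : S) : ℝ :=
  if hz : M.Reachable z then
    M.μ.real (M.X (hz.choose + h) ⁻¹' {y} ∩ M.X hz.choose ⁻¹' {z}) /
      M.μ.real (M.X hz.choose ⁻¹' {z})
  else 0

def IsCylinderBefore (t : ℝ) (A : Set M.Omega) : Prop :=
  ∃ (n : ℕ) (ts : Fin n → ℝ) (xs : Fin n → S),
    (∀ i, 0 ≤ ts i ∧ ts i ≤ t) ∧ A = ⋂ i, M.X (ts i) ⁻¹' {xs i}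

/-- `E[Φ(X_t); A]`. -/
noncomputable def setMean (Φ : S → ℝ) (t : ℝ) (A : Set M.Omega) : ℝ :=
  ∑' y, Φ y * M.μ.real (M.X t ⁻¹' {y} ∩ A)

def IsInfinitesimallyExcessive (Φ : S → ℝ) : Prop :=
  ∀ ε > 0, ∀ᶠ h in 𝓝[>] 0, ∀ z, ∑' y, Φ y * M.transProb h z y ≤ Φ z + ε * h

variable {M}

theorem isCylinderBefore_univ (t : ℝ) : M.IsCylinderBefore t univ :=
  ⟨0, Fin.elim0, Fin.elim0, Fin.rec0, by simp⟩

theorem IsCylinderBefore.mono {t t' : ℝ} {A : Set M.Omega} (hA : M.IsCylinderBefore t A)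
    (htt' : t ≤ t') : M.IsCylinderBefore t' A :=
  let ⟨n, ts, xs, hts, hA⟩ := hA
  ⟨n, ts, xs, fun i => ⟨(hts i).1, (hts i).2.trans htt'⟩, hA⟩

theorem IsCylinderBefore.inter_preimage {t : ℝ} {A : Set M.Omega}
    (hA : M.IsCylinderBefore t A) (ht : 0 ≤ t) (x : S) :
    M.IsCylinderBefore t (A ∩ M.X t ⁻¹' {x}) := by
  obtain ⟨n, ts, xs, hts, rfl⟩ := hA
  refine ⟨n + 1, Fin.cons t ts, Fin.cons x xs, Fin.cases ⟨ht, le_rfl⟩ hts, ?_⟩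
  ext ω
  simp [Fin.forall_fin_succ, and_comm]

theorem transProb_of_not_reachable {z : S} (hz : ¬ M.Reachable z) (h : ℝ) (y : S) :
    M.transProb h z y = 0 :=
  dif_neg hz

theorem transProb_nonneg (h : ℝ) (z y : S) : 0 ≤ M.transProb h z y := by
  unfold transProb
  split_ifs <;> positivity

theorem transProb_mul_measureReal {v h : ℝ} (hv : 0 ≤ v) (hh : 0 ≤ h) (z y : S) :
    M.transProb h z y * M.μ.real (M.X v ⁻¹' {z}) =
      M.μ.real (M.X (v + h) ⁻¹' {y} ∩ M.X v ⁻¹' {z}) := by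
  by_cases hz : M.Reachable z
  · obtain ⟨hv₀, hz₀⟩ := hz.choose_spec
    have hhom : M.μ.real (M.X (v + h) ⁻¹' {y} ∩ M.X v ⁻¹' {z}) *
          M.μ.real (M.X hz.choose ⁻¹' {z}) =
        M.μ.real (M.X (hz.choose + h) ⁻¹' {y} ∩ M.X hz.choose ⁻¹' {z}) *
          M.μ.real (M.X v ⁻¹' {z}) := by
      have := congrArg ENNReal.toReal (M.homog v hz.choose h z y hv hv₀ hh)
      rwa [ENNReal.toReal_mul, ENNReal.toReal_mul] at this
    rw [transProb, dif_pos hz, div_mul_eq_mul_div,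
      div_eq_iff ((measureReal_ne_zero_iff).2 hz₀)]
    exact hhom.symm
  · have h0 : M.μ (M.X v ⁻¹' {z}) = 0 := not_not.1 fun h => hz ⟨v, hv, h⟩
    simp [transProb_of_not_reachable hz, measureReal_def,
      measure_mono_null inter_subset_right h0]

theorem transProb_eq_div {v h : ℝ} (hv : 0 ≤ v) (hh : 0 ≤ h) {z : S}
    (hp : M.μ.real (M.X v ⁻¹' {z}) ≠ 0) (y : S) :
    M.transProb h z y =
      M.μ.real (M.X (v + h) ⁻¹' {y} ∩ M.X v ⁻¹' {z}) / M.μ.real (M.X v ⁻¹' {z}) := by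
  rw [← transProb_mul_measureReal hv hh, mul_div_cancel_right₀ _ hp]

/-- The Markov property in terms of `transProb`. -/
theorem transProb_mul_measureReal_inter {v h : ℝ} (hv : 0 ≤ v) (hh : 0 ≤ h)
    {A : Set M.Omega} (hA : M.IsCylinderBefore v A) (z y : S) :
    M.transProb h z y * M.μ.real (M.X v ⁻¹' {z} ∩ A) =
      M.μ.real (M.X (v + h) ⁻¹' {y} ∩ M.X v ⁻¹' {z} ∩ A) := by
  obtain ⟨n, ts, xs, hts, rfl⟩ := hA
  have hmk : M.μ.real (M.X (v + h) ⁻¹' {y} ∩ M.X v ⁻¹' {z} ∩ ⋂ i, M.X (ts i) ⁻¹' {xs i}) *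
        M.μ.real (M.X v ⁻¹' {z}) =
      M.μ.real (M.X (v + h) ⁻¹' {y} ∩ M.X v ⁻¹' {z}) *
        M.μ.real (M.X v ⁻¹' {z} ∩ ⋂ i, M.X (ts i) ⁻¹' {xs i}) := by
    have := congrArg ENNReal.toReal (M.markov n ts xs v (v + h) z y hts (by linarith))
    rwa [ENNReal.toReal_mul, ENNReal.toReal_mul] at this
  by_cases hz : M.μ.real (M.X v ⁻¹' {z}) = 0
  · rw [measureReal_mono_null inter_subset_left hz,
      measureReal_mono_null (inter_subset_left.trans inter_subset_right) hz, mul_zero]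
  · refine mul_right_cancel₀ hz ?_
    linear_combination M.μ.real (M.X v ⁻¹' {z} ∩ ⋂ i, M.X (ts i) ⁻¹' {xs i}) *
      transProb_mul_measureReal hv hh z y - hmk

theorem tendsto_transProb_div {z y : S} (hz : M.Reachable z) (hzy : z ≠ y) :
    Tendsto (fun h => M.transProb h z y / h) (𝓝[>] 0) (𝓝 (q z y)) := by
  obtain ⟨v, hv, hz₀⟩ := hz
  have hp : M.μ.real (M.X v ⁻¹' {z}) ≠ 0 := (measureReal_ne_zero_iff).2 hz₀
  have hrate : Tendsto (fun h => M.μ.real (M.X (v + h) ⁻¹' {y} ∩ M.X v ⁻¹' {z}) / h /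
      M.μ.real (M.X v ⁻¹' {z})) (𝓝[>] 0)
      (𝓝 (q z y * M.μ.real (M.X v ⁻¹' {z}) / M.μ.real (M.X v ⁻¹' {z}))) :=
    (M.rate v z y hv hzy).div_const _
  rw [mul_div_cancel_right₀ _ hp] at hrate
  refine hrate.congr' (eventually_nhdsWithin_of_forall fun h (hh : 0 < h) => ?_)
  dsimp only
  rw [transProb_eq_div hv hh.le hp, div_right_comm]

theorem tendsto_transProb_sub_one_div {z : S} (hz : M.Reachable z) :
    Tendsto (fun h => (M.transProb h z z - 1) / h) (𝓝[>] 0) (𝓝 (-∑' y, q z y)) := by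
  obtain ⟨v, hv, hz₀⟩ := hz
  have hp : M.μ.real (M.X v ⁻¹' {z}) ≠ 0 := (measureReal_ne_zero_iff).2 hz₀
  have hrate : Tendsto (fun h => (M.μ.real (M.X (v + h) ⁻¹' {z} ∩ M.X v ⁻¹' {z}) -
      M.μ.real (M.X v ⁻¹' {z})) / h / M.μ.real (M.X v ⁻¹' {z})) (𝓝[>] 0)
      (𝓝 ((-∑' y, q z y) * M.μ.real (M.X v ⁻¹' {z}) / M.μ.real (M.X v ⁻¹' {z}))) :=
    (M.rate_stay v z hv).div_const _
  rw [mul_div_cancel_right₀ _ hp] at hrate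
  refine hrate.congr' (eventually_nhdsWithin_of_forall fun h (hh : 0 < h) => ?_)
  dsimp only
  rw [transProb_eq_div hv hh.le hp, div_sub_one hp, div_right_comm]

theorem setMean_nonneg {Φ : S → ℝ} (hΦ0 : 0 ≤ Φ) (t : ℝ) (A : Set M.Omega) :
    0 ≤ M.setMean Φ t A :=
  tsum_nonneg fun y => mul_nonneg (hΦ0 y) measureReal_nonneg

theorem setMean_inter_preimage (Φ : S → ℝ) (t : ℝ) (A : Set M.Omega) (x : S) :
    M.setMean Φ t (A ∩ M.X t ⁻¹' {x}) = Φ x * M.μ.real (M.X t ⁻¹' {x} ∩ A) := by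
  rw [setMean, tsum_eq_single x fun y hyx => ?_]
  · rw [inter_comm A, ← inter_assoc, inter_self]
  · rw [inter_left_comm, (disjoint_singleton.2 hyx).preimage (M.X t) |>.inter_eq, inter_empty,
      measureReal_empty, mul_zero]

theorem setMean_univ_of_ae_eq (Φ : S → ℝ) {t : ℝ} {x : S} (h : ∀ᵐ ω ∂M.μ, M.X t ω = x) :
    M.setMean Φ t univ = Φ x := by
  rw [setMean, tsum_eq_single x fun y hyx => ?_]
  · have hx : M.X t ⁻¹' {x} =ᵐ[M.μ] univ := ae_eq_univ.2 (ae_iff.1 h)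
    rw [inter_univ, measureReal_congr hx, probReal_univ, mul_one]
  · have hy : M.μ (M.X t ⁻¹' {y} ∩ univ) = 0 :=
      measure_mono_null (fun ω hω hx => hyx (hω.1.symm.trans hx)) (ae_iff.1 h)
    rw [measureReal_def, hy, ENNReal.toReal_zero, mul_zero]

theorem measure_exists_eq_le {a : S} {b : ℝ≥0∞}
    (hT : ∀ T : Finset ℝ, (∀ r ∈ T, 0 ≤ r) → M.μ (⋃ r ∈ T, M.X r ⁻¹' {a}) ≤ b) :
    M.μ {ω | ∃ t, 0 ≤ t ∧ M.X t ω = a} ≤ b := by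
  classical
  have hsub :
      {ω | ∃ t, 0 ≤ t ∧ M.X t ω = a} ⊆ ⋃ T : Finset ℚ≥0, ⋃ q ∈ T, M.X q ⁻¹' {a} := by
    rintro ω ⟨t, ht, hX⟩
    obtain ⟨ε, hε, hconst⟩ := M.rightCont ω t
    obtain ⟨q, htq, hqε⟩ := exists_rat_btwn (lt_add_of_pos_right t hε)
    have hq : (0 : ℚ) ≤ q := by exact_mod_cast ht.trans htq.le
    refine mem_iUnion.2 ⟨{⟨q, hq⟩}, mem_iUnion₂.2 ⟨⟨q, hq⟩, Finset.mem_singleton_self _, ?_⟩⟩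
    exact (hconst q htq.le hqε).trans hX
  refine (measure_mono hsub).trans ?_
  have hmono : Monotone fun T : Finset ℚ≥0 => ⋃ q ∈ T, M.X q ⁻¹' {a} := fun T T' hTT' =>
    iUnion₂_mono' fun q hq => ⟨q, (show T ⊆ T' from hTT') hq, subset_rfl⟩
  rw [hmono.directed_le.measure_iUnion]
  refine iSup_le fun T => ?_
  have hTq := hT (T.image (↑)) (by simp [NNRat.cast_nonneg])
  rwa [Finset.set_biUnion_finset_image] at hTq

variable [MeasurableSingletonClass S] [Countable S]

theorem hasSum_measureReal_preimage_inter (t : ℝ) (A : Set M.Omega) :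
    HasSum (fun x => M.μ.real (M.X t ⁻¹' {x} ∩ A)) (M.μ.real A) := by
  have hmeas : ∀ x, MeasurableSet (M.X t ⁻¹' {x}) := fun x =>
    M.meas t (measurableSet_singleton x)
  have h : ∑' x, M.μ (M.X t ⁻¹' {x} ∩ A) = M.μ A := by
    simp_rw [← Measure.restrict_apply (hmeas _)]
    rw [← measure_iUnion (fun x y hxy => (disjoint_singleton.2 hxy).preimage _) hmeas,
      ← preimage_iUnion, iUnion_of_singleton, preimage_univ, Measure.restrict_apply_univ]
  have hsum := ENNReal.hasSum_toReal
    (h.symm ▸ measure_ne_top _ _ : ∑' x, M.μ (M.X t ⁻¹' {x} ∩ A) ≠ ⊤)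
  rwa [← ENNReal.tsum_toReal_eq fun _ => measure_ne_top _ _, h] at hsum

theorem hasSum_transProb {z : S} (hz : M.Reachable z) {h : ℝ} (hh : 0 ≤ h) :
    HasSum (M.transProb h z) 1 := by
  obtain ⟨v, hv, hz₀⟩ := hz
  have hp : M.μ.real (M.X v ⁻¹' {z}) ≠ 0 := (measureReal_ne_zero_iff).2 hz₀
  rw [funext (transProb_eq_div hv hh hp), ← div_self hp]
  exact (M.hasSum_measureReal_preimage_inter (v + h) _).div_const _

theorem summable_transProb {h : ℝ} (hh : 0 ≤ h) (z : S) : Summable (M.transProb h z) := by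
  by_cases hz : M.Reachable z
  · exact (hasSum_transProb hz hh).summable
  · rw [show M.transProb h z = 0 from funext (transProb_of_not_reachable hz h)]
    exact summable_zero

theorem tsum_transProb_le_one {h : ℝ} (hh : 0 ≤ h) (z : S) :
    ∑' y, M.transProb h z y ≤ 1 := by
  by_cases hz : M.Reachable z
  · exact (hasSum_transProb hz hh).tsum_eq.le
  · simp [transProb_of_not_reachable hz]

theorem summable_mul_measureReal {Φ : S → ℝ} {C : ℝ} (hΦ0 : 0 ≤ Φ) (hΦC : ∀ y, Φ y ≤ C)
    (t : ℝ) (A : Set M.Omega) : Summable fun y => Φ y * M.μ.real (M.X t ⁻¹' {y} ∩ A) :=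
  (M.hasSum_measureReal_preimage_inter t A).summable.bounded_mul (fun _ => measureReal_nonneg)
    hΦ0 hΦC

theorem setMean_add_le {Φ : S → ℝ} {C δ v h : ℝ} (hΦ0 : 0 ≤ Φ) (hΦC : ∀ y, Φ y ≤ C)
    (hv : 0 ≤ v) (hh : 0 ≤ h) (hstep : ∀ z, ∑' y, Φ y * M.transProb h z y ≤ Φ z + δ)
    {A : Set M.Omega} (hA : M.IsCylinderBefore v A) :
    M.setMean Φ (v + h) A ≤ M.setMean Φ v A + δ * M.μ.real A := by
  set m := fun z => M.μ.real (M.X v ⁻¹' {z} ∩ A)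
  have hm := M.hasSum_measureReal_preimage_inter v A
  have hsplit : ∀ y, HasSum (fun z => M.transProb h z y * m z)
      (M.μ.real (M.X (v + h) ⁻¹' {y} ∩ A)) := fun y => by
    convert M.hasSum_measureReal_preimage_inter v (M.X (v + h) ⁻¹' {y} ∩ A) using 2 with z
    rw [transProb_mul_measureReal_inter hv hh hA, inter_left_comm, inter_assoc]
  have hswap : M.setMean Φ (v + h) A = ∑' z, (∑' y, Φ y * M.transProb h z y) * m z := by
    simp_rw [← tsum_mul_right, mul_assoc]
    rw [← tsum_comm_of_nonneg (fun y z => mul_nonneg (hΦ0 y)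
      (mul_nonneg (transProb_nonneg h z y) measureReal_nonneg))
      (fun y => (hsplit y).summable.mul_left (Φ y)) ?_]
    · exact tsum_congr fun y => by rw [tsum_mul_left, (hsplit y).tsum_eq]
    · refine (summable_mul_measureReal hΦ0 hΦC (v + h) A).congr fun y => ?_
      rw [tsum_mul_left, (hsplit y).tsum_eq]
  have hle : ∀ z, (∑' y, Φ y * M.transProb h z y) * m z ≤ (Φ z + δ) * m z := fun z =>
    mul_le_mul_of_nonneg_right (hstep z) measureReal_nonneg
  have hR : Summable fun z => (Φ z + δ) * m z := by
    simpa only [add_mul] using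
      (summable_mul_measureReal hΦ0 hΦC v A).add (hm.summable.mul_left δ)
  calc M.setMean Φ (v + h) A = ∑' z, (∑' y, Φ y * M.transProb h z y) * m z := hswap
    _ ≤ ∑' z, (Φ z + δ) * m z :=
      (hR.of_nonneg_of_le (fun z => mul_nonneg (tsum_nonneg fun y =>
        mul_nonneg (hΦ0 y) (transProb_nonneg h z y)) measureReal_nonneg) hle).tsum_le_tsum
          hle hR
    _ = M.setMean Φ v A + δ * M.μ.real A := by
      simp only [add_mul]
      rw [(summable_mul_measureReal hΦ0 hΦC v A).tsum_add (hm.summable.mul_left δ),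
        tsum_mul_left, hm.tsum_eq]
      rfl

theorem IsInfinitesimallyExcessive.setMean_le {Φ : S → ℝ} {C t s : ℝ}
    (hΦ : M.IsInfinitesimallyExcessive Φ) (hΦ0 : 0 ≤ Φ) (hΦC : ∀ y, Φ y ≤ C) (ht : 0 ≤ t)
    {A : Set M.Omega} (hA : M.IsCylinderBefore t A) (hts : t ≤ s) :
    M.setMean Φ s A ≤ M.setMean Φ t A := by
  have key : ∀ ε > 0, M.setMean Φ s A ≤ M.setMean Φ t A + ε * (s - t) := fun ε hε =>
    le_add_mul_sub_of_eventually_le (F := fun v => M.setMean Φ v A) hts <|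
      ((hΦ ε hε).and self_mem_nhdsWithin).mono
      fun h ⟨hstep, (hh : 0 < h)⟩ v htv =>
        (setMean_add_le hΦ0 hΦC (ht.trans htv) hh.le hstep (hA.mono htv)).trans <| by
          have := mul_le_of_le_one_right (by positivity : 0 ≤ ε * h)
            (measureReal_le_one (μ := M.μ) (s := A))
          linarith
  refine le_of_forall_pos_le_add fun η hη =>
    (key (η / (s - t + 1)) (div_pos hη (by linarith))).trans ?_
  have : η / (s - t + 1) * (s - t) ≤ η := by
    rw [div_mul_eq_mul_div, div_le_iff₀ (by linarith)]
    nlinarith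
  linarith

theorem IsInfinitesimallyExcessive.mul_measureReal_inter_biUnion_le {Φ : S → ℝ} {C : ℝ}
    (hΦ : M.IsInfinitesimallyExcessive Φ) (hΦ0 : 0 ≤ Φ) (hΦC : ∀ y, Φ y ≤ C) (a : S)
    (T : Finset ℝ) {t : ℝ} {A : Set M.Omega} (ht : 0 ≤ t) (hA : M.IsCylinderBefore t A)
    (hT : ∀ r ∈ T, t ≤ r) :
    Φ a * M.μ.real (A ∩ ⋃ r ∈ T, M.X r ⁻¹' {a}) ≤ M.setMean Φ t A := by
  classical
  induction T using Finset.induction_on_min generalizing t A with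
  | empty => simpa using M.setMean_nonneg hΦ0 t A
  | insert r T hrT ih =>
    have htr : t ≤ r := hT r (Finset.mem_insert_self r T)
    have hr : 0 ≤ r := ht.trans htr
    set E := A ∩ ⋃ r' ∈ insert r T, M.X r' ⁻¹' {a}
    have hterm : ∀ z, Φ a * M.μ.real (M.X r ⁻¹' {z} ∩ E) ≤
        Φ z * M.μ.real (M.X r ⁻¹' {z} ∩ A) := by
      intro z
      obtain rfl | hza := eq_or_ne z a
      · exact mul_le_mul_of_nonneg_left
          (measureReal_mono (inter_subset_inter_right _ inter_subset_left)) (hΦ0 z)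
      have hsub :
          M.X r ⁻¹' {z} ∩ E ⊆ (A ∩ M.X r ⁻¹' {z}) ∩ ⋃ r' ∈ T, M.X r' ⁻¹' {a} := by
        rintro ω ⟨hz, hωA, hU⟩
        rw [Finset.set_biUnion_insert] at hU
        exact ⟨⟨hωA, hz⟩, hU.resolve_left fun ha => hza (hz.symm.trans ha)⟩
      calc Φ a * M.μ.real (M.X r ⁻¹' {z} ∩ E)
          ≤ Φ a * M.μ.real ((A ∩ M.X r ⁻¹' {z}) ∩ ⋃ r' ∈ T, M.X r' ⁻¹' {a}) :=
            mul_le_mul_of_nonneg_left (measureReal_mono hsub) (hΦ0 a)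
        _ ≤ M.setMean Φ r (A ∩ M.X r ⁻¹' {z}) :=
            ih hr ((hA.mono htr).inter_preimage hr z) fun r' hr' => (hrT r' hr').le
        _ = Φ z * M.μ.real (M.X r ⁻¹' {z} ∩ A) := setMean_inter_preimage Φ r A z
    have hE := M.hasSum_measureReal_preimage_inter r E
    calc Φ a * M.μ.real E = ∑' z, Φ a * M.μ.real (M.X r ⁻¹' {z} ∩ E) := by
          rw [tsum_mul_left, hE.tsum_eq]
      _ ≤ M.setMean Φ r A :=
          (hE.summable.mul_left _).tsum_le_tsum hterm (summable_mul_measureReal hΦ0 hΦC r A)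
      _ ≤ M.setMean Φ t A := hΦ.setMean_le hΦ0 hΦC ht hA htr

theorem eventually_tsum_mul_transProb_le {Φ : S → ℝ} {C ε : ℝ} (hΦ0 : 0 ≤ Φ)
    (hΦC : ∀ y, Φ y ≤ C) (hε : 0 < ε) {z : S} {F : Finset S} (hzF : z ∉ F)
    (hF : ∀ y ∉ F, q z y = 0) (hgen : ∑ y ∈ F, q z y * (Φ y - Φ z) ≤ 0) :
    ∀ᶠ h in 𝓝[>] 0, ∑' y, Φ y * M.transProb h z y ≤ Φ z + ε * h := by
  classical
  by_cases hz : M.Reachable z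
  swap
  · filter_upwards [self_mem_nhdsWithin] with h (hh : 0 < h)
    simp only [transProb_of_not_reachable hz, mul_zero, tsum_zero]
    exact add_nonneg (hΦ0 z) (by positivity)
  set G := fun h => (Φ z - C) * ((M.transProb h z z - 1) / h) +
    ∑ y ∈ F, (Φ y - C) * (M.transProb h z y / h)
  have hlim : (Φ z - C) * -∑' y, q z y + ∑ y ∈ F, (Φ y - C) * q z y =
      ∑ y ∈ F, q z y * (Φ y - Φ z) := by
    rw [tsum_eq_sum hF, mul_neg, Finset.mul_sum, ← Finset.sum_neg_distrib,
      ← Finset.sum_add_distrib]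
    exact Finset.sum_congr rfl fun y _ => by ring
  have hG : Tendsto G (𝓝[>] 0) (𝓝 (∑ y ∈ F, q z y * (Φ y - Φ z))) :=
    hlim ▸ ((tendsto_transProb_sub_one_div hz).const_mul (Φ z - C)).add
      (tendsto_finsetSum F fun y hy =>
        (tendsto_transProb_div hz (ne_of_mem_of_not_mem hy hzF).symm).const_mul (Φ y - C))
  filter_upwards [hG.eventually (gt_mem_nhds (hgen.trans_lt hε)), self_mem_nhdsWithin]
    with h hGh (hh : 0 < h)
  have hsplit := tsum_mul_le_add_sum ((hΦ0 z).trans (hΦC z)) hΦ0 hΦC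
    (M.summable_transProb hh.le z) (fun y => M.transProb_nonneg h z y)
    (M.tsum_transProb_le_one hh.le z) (insert z F)
  rw [Finset.sum_insert hzF] at hsplit
  -- `Φ z + G h * h` bounds `∑' y, Φ y * transProb h z y`, as `Φ ≤ C` off `insert z F`.
  have hGh' : G h * h = (Φ z - C) * M.transProb h z z - (Φ z - C) +
      ∑ y ∈ F, (Φ y - C) * M.transProb h z y := by
    simp only [G, add_mul, Finset.sum_mul, mul_assoc, div_mul_cancel₀ _ hh.ne']
    ring
  linarith [mul_lt_mul_of_pos_right hGh hh]

theorem isInfinitesimallyExcessive_of_generator_nonpos {Φ : S → ℝ} {C : ℝ} (hΦ0 : 0 ≤ Φ)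
    (hΦC : ∀ y, Φ y ≤ C) (B : Finset S) (hB : ∀ z ∉ B, Φ z = C)
    (hgen : ∀ z ∈ B, ∃ F : Finset S, z ∉ F ∧ (∀ y ∉ F, q z y = 0) ∧
      ∑ y ∈ F, q z y * (Φ y - Φ z) ≤ 0) :
    M.IsInfinitesimallyExcessive Φ := by
  intro ε hε
  have hBev : ∀ᶠ h in 𝓝[>] 0, ∀ z ∈ B, ∑' y, Φ y * M.transProb h z y ≤ Φ z + ε * h :=
    (B.eventually_all).2 fun z hz =>
      let ⟨_, hzF, hF, hgenz⟩ := hgen z hz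
      eventually_tsum_mul_transProb_le hΦ0 hΦC hε hzF hF hgenz
  filter_upwards [hBev, self_mem_nhdsWithin] with h hBh (hh : 0 < h) z
  by_cases hz : z ∈ B
  · exact hBh z hz
  have hsplit := tsum_mul_le_add_sum ((hΦ0 z).trans (hΦC z)) hΦ0 hΦC
    (M.summable_transProb hh.le z) (fun y => M.transProb_nonneg h z y)
    (M.tsum_transProb_le_one hh.le z) ∅
  rw [Finset.sum_empty, add_zero, ← hB z hz] at hsplit
  linarith [mul_pos hε hh]

end CTMC

namespace ImmigrationDeath

/-- The scale function of the immigration-death chain with `ρ = μ / α`: it is harmonic for the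
generator away from `0`, since `α ρ^x x! = μ x ρ^(x-1) (x-1)!`. -/
noncomputable def scale (ρ : ℝ) (x : ℕ) : ℝ := ∑ k ∈ Finset.range x, ρ ^ k * k !

variable {ρ : ℝ}

theorem scale_succ (x : ℕ) : scale ρ (x + 1) = scale ρ x + ρ ^ x * x ! :=
  Finset.sum_range_succ _ x

theorem scale_nonneg (hρ : 0 ≤ ρ) (x : ℕ) : 0 ≤ scale ρ x :=
  Finset.sum_nonneg fun _ _ => by positivity

theorem scale_mono (hρ : 0 ≤ ρ) : Monotone (scale ρ) := fun _ _ hxy =>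
  Finset.sum_le_sum_of_subset_of_nonneg (Finset.range_subset_range.2 hxy)
    fun _ _ _ => by positivity

theorem scale_pos (hρ : 0 ≤ ρ) {x : ℕ} (hx : x ≠ 0) : 0 < scale ρ x :=
  calc (0 : ℝ) < scale ρ 1 := by simp [scale]
    _ ≤ scale ρ x := scale_mono hρ (Nat.one_le_iff_ne_zero.2 hx)

theorem scale_harmonic {α μ : ℝ} (h : α * ρ = μ) (m : ℕ) :
    μ * (m + 1 : ℕ) * (scale ρ m - scale ρ (m + 1)) +
      α * (scale ρ (m + 2) - scale ρ (m + 1)) = 0 := by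
  rw [scale_succ (m + 1), scale_succ m, ← h, Nat.factorial_succ]
  push_cast
  ring

theorem pow_mul_factorial_mul_le (k m : ℕ) (hρ : 0 ≤ ρ) :
    ρ ^ k * k ! * (ρ ^ m * m !) ≤ ρ ^ (k + m) * (k + m)! := by
  rw [show ρ ^ k * k ! * (ρ ^ m * m !) = ρ ^ (k + m) * (k ! * m ! : ℕ) by push_cast; ring]
  gcongr
  exact Nat.le_of_dvd (Nat.factorial_pos _) (Nat.factorial_mul_factorial_dvd_factorial_add k m)

theorem div_exp_one_pow_le_factorial (m : ℕ) : ((m : ℝ) / Real.exp 1) ^ m ≤ m ! := by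
  have h := Real.pow_div_factorial_le_exp (m : ℝ) (Nat.cast_nonneg m) m
  rw [div_le_iff₀ (by positivity), ← Real.exp_one_pow] at h
  rw [div_pow, div_le_iff₀ (by positivity)]
  linarith

/-- Each of the `l` terms of `scale ρ l` is at most `(e / c) ^ l` times the last term
`ρ ^ (2l-1) (2l-1)!` of `scale ρ (2l)`: split `(2l-1)! ≥ k! m!` with `m = 2l-1-k ≥ l`, and
`ρ ^ m m! ≥ (ρ m / e) ^ m ≥ (c / e) ^ l`. -/
theorem scale_le_mul_pow_mul_scale {c : ℝ} (hc : Real.exp 1 ≤ c) {l : ℕ} (hρ : 0 ≤ ρ)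
    (hcl : c ≤ l * ρ) :
    scale ρ l ≤ l * (Real.exp 1 / c) ^ l * scale ρ (2 * l) := by
  have hc0 : 0 < c := (Real.exp_pos 1).trans_le hc
  have hce : 1 ≤ c / Real.exp 1 := (one_le_div (Real.exp_pos 1)).2 hc
  have hterm : ∀ k ∈ Finset.range l, ρ ^ k * k ! ≤ (Real.exp 1 / c) ^ l * scale ρ (2 * l) := by
    intro k hk
    obtain ⟨m, hm⟩ : ∃ m, k + m = 2 * l - 1 := ⟨2 * l - 1 - k, by grind⟩
    have hlm : l ≤ m := by grind
    have hcm : (c / Real.exp 1) ^ l ≤ ρ ^ m * m ! :=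
      calc (c / Real.exp 1) ^ l ≤ (c / Real.exp 1) ^ m := pow_le_pow_right₀ hce hlm
        _ ≤ (m * ρ / Real.exp 1) ^ m := by
          gcongr
          exact hcl.trans (by gcongr)
        _ = ρ ^ m * ((m : ℝ) / Real.exp 1) ^ m := by rw [← mul_pow]; ring
        _ ≤ ρ ^ m * m ! := by gcongr; exact div_exp_one_pow_le_factorial m
    have hinv : (Real.exp 1 / c) ^ l * (c / Real.exp 1) ^ l = 1 := by
      rw [← mul_pow, div_mul_div_comm, mul_comm c, div_self (by positivity), one_pow]
    have hlast : ρ ^ (k + m) * (k + m)! ≤ scale ρ (2 * l) := by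
      rw [hm]
      exact Finset.single_le_sum (f := fun j => ρ ^ j * (j ! : ℝ)) (fun j _ => by positivity)
        (Finset.mem_range.2 (by have := Finset.mem_range.1 hk; omega))
    calc ρ ^ k * k ! = (Real.exp 1 / c) ^ l * (ρ ^ k * k ! * (c / Real.exp 1) ^ l) := by
          linear_combination (-(ρ ^ k * k !)) * hinv
      _ ≤ (Real.exp 1 / c) ^ l * scale ρ (2 * l) := by
          refine mul_le_mul_of_nonneg_left ?_ (by positivity)
          exact ((mul_le_mul_of_nonneg_left hcm (by positivity)).trans
            (pow_mul_factorial_mul_le k m hρ)).trans hlast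
  simpa [scale, mul_assoc] using Finset.sum_le_card_nsmul _ _ _ hterm

theorem idAbsRates_succ_eq_zero {α μ : ℝ} {m y : ℕ} (hy : y ∉ ({m, m + 2} : Finset ℕ)) :
    idAbsRates α μ (m + 1) y = 0 := by
  simp only [Finset.mem_insert, Finset.mem_singleton, not_or] at hy
  obtain ⟨hym, hym2⟩ := hy
  simp only [idAbsRates]
  split_ifs <;> first | rfl | omega

theorem isInfinitesimallyExcessive_scale_min {α μ : ℝ} (hα : 0 < α) (hμ : 0 ≤ μ)
    (M : CTMC (idAbsRates α μ)) (L : ℕ) :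
    M.IsInfinitesimallyExcessive fun x => scale (μ / α) (min x L) := by
  have hρ : 0 ≤ μ / α := by positivity
  refine CTMC.isInfinitesimallyExcessive_of_generator_nonpos (C := scale (μ / α) L)
    (fun x => scale_nonneg hρ _) (fun x => scale_mono hρ (min_le_right x L)) (Finset.range L)
    (fun z hz => by rw [min_eq_right (not_lt.1 (Finset.mem_range.not.1 hz))]) ?_
  rintro (_ | m) hm
  · exact ⟨∅, Finset.notMem_empty 0, fun y _ => if_pos rfl, by simp⟩
  refine ⟨{m, m + 2}, by simp, fun y hy => idAbsRates_succ_eq_zero hy, le_of_eq ?_⟩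
  have hmL : m + 2 ≤ L := Finset.mem_range.1 hm
  rw [Finset.sum_pair (by omega), min_eq_left (by omega), min_eq_left (by omega),
    min_eq_left hmL]
  simp only [idAbsRates, if_neg (Nat.succ_ne_zero m), if_neg (show m ≠ m + 1 + 1 by omega),
    if_true]
  exact scale_harmonic (mul_div_cancel₀ μ hα.ne') m

theorem measureReal_exists_eq_le_scale_div {α μ : ℝ} (hα : 0 < α) (hμ : 0 ≤ μ)
    (M : CTMC (idAbsRates α μ)) {l L : ℕ} (hlL : l ≤ L) (hL : L ≠ 0)
    (hinit : ∀ᵐ ω ∂M.μ, M.X 0 ω = l) :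
    M.μ.real {ω | ∃ t, 0 ≤ t ∧ M.X t ω = L} ≤ scale (μ / α) l / scale (μ / α) L := by
  have hρ : 0 ≤ μ / α := by positivity
  have hL0 : 0 < scale (μ / α) L := scale_pos hρ hL
  have hΦ := isInfinitesimallyExcessive_scale_min hα hμ M L
  refine ENNReal.toReal_le_of_le_ofReal (div_nonneg (scale_nonneg hρ l) hL0.le)
    (M.measure_exists_eq_le fun T hT => ?_)
  have hT := hΦ.mul_measureReal_inter_biUnion_le (fun x => scale_nonneg hρ _)
    (fun x => scale_mono hρ (min_le_right x L)) L T le_rfl (CTMC.isCylinderBefore_univ 0) hT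
  rw [univ_inter, CTMC.setMean_univ_of_ae_eq _ hinit, min_self, min_eq_left hlL] at hT
  rw [← ofReal_measureReal (measure_ne_top _ _)]
  exact ENNReal.ofReal_le_ofReal ((le_div_iff₀' hL0).2 hT)

end ImmigrationDeath

open ImmigrationDeath

/-- **Lemma 3.3 (hitting probability of immigration-death processes absorbing
at 0).** For immigration-death processes absorbing at `0` with immigration rate
`α(N) > 0`, death rate `μ(N) > 0` and initial states `l(N) → ∞`, if
`lim l(N)μ(N)/α(N) > e`, then the probability of ever reaching the level
`2 l(N)` tends to `0`. -/
theorem id_abs_hitting_prob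
    (alpha mu : ℕ → ℝ) (halpha : ∀ N, 0 < alpha N) (hmu : ∀ N, 0 < mu N)
    (l : ℕ → ℕ) (hl : Tendsto (fun N => (l N : ℝ)) atTop atTop)
    (hlim : ∃ c : ℝ, Real.exp 1 < c ∧
      ∀ᶠ N in atTop, c ≤ (l N : ℝ) * mu N / alpha N)
    (M : ∀ N : ℕ, CTMC (idAbsRates (alpha N) (mu N)))
    (hinit : ∀ N, ∀ᵐ ω ∂(M N).μ, (M N).X 0 ω = l N) :
    Tendsto
      (fun N => ((M N).μ {ω | ∃ t : ℝ, 0 ≤ t ∧ (M N).X t ω = 2 * l N}).toReal)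
      atTop (nhds 0) := by
  obtain ⟨c, hc, hcl⟩ := hlim
  have hc0 : 0 < c := (Real.exp_pos 1).trans hc
  have hlN : Tendsto l atTop atTop := tendsto_natCast_atTop_iff.1 hl
  have hbound : Tendsto (fun N => (l N : ℝ) * (Real.exp 1 / c) ^ l N) atTop (𝓝 0) :=
    (tendsto_self_mul_const_pow_of_lt_one (by positivity) ((div_lt_one hc0).2 hc)).comp hlN
  refine squeeze_zero' (Eventually.of_forall fun N => ENNReal.toReal_nonneg) ?_ hbound
  filter_upwards [hcl, hlN.eventually_ne_atTop 0] with N hcN hl0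
  have hρ : 0 ≤ mu N / alpha N := (div_pos (hmu N) (halpha N)).le
  calc ((M N).μ {ω | ∃ t : ℝ, 0 ≤ t ∧ (M N).X t ω = 2 * l N}).toReal
      ≤ scale (mu N / alpha N) (l N) / scale (mu N / alpha N) (2 * l N) :=
        measureReal_exists_eq_le_scale_div (halpha N) (hmu N).le (M N) (by omega) (by omega)
          (hinit N)
    _ ≤ l N * (Real.exp 1 / c) ^ l N :=
        (div_le_iff₀ (scale_pos hρ (by omega))).2
          (scale_le_mul_pow_mul_scale hc.le hρ (by rwa [← mul_div_assoc]))
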